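/- Let C ∈ V with C² < 0 and C 0 > 0. Then every β ∈ Pos̄ with β·C ≤ 0 can be written as β = γ + t•C with γ ∈ Pos̄, γ·C = 0, and t ≥ 0. Equivalently, C^{≤0} ∩ Pos̄ ⊆ (C^⊥ ∩ Pos̄) + R(C). -/

import Mathlib

/-- The Minkowski bilinear form on `Fin ρ → ℝ`:
`B(x,y) = x 0 * y 0 − ∑_{i ≠ 0} x i * y i`, of signature `(1, ρ−1)`. -/
noncomputable def Bform {ρ : ℕ} [NeZero ρ] (x y : Fin ρ → ℝ) : ℝ :=
  x 0 * y 0 - ∑ i ∈ Finset.univ.erase (0 : Fin ρ), x i * y i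

/-- The closed positive cone `Pos̄ = {x : x² ≥ 0 ∧ x 0 ≥ 0}`. -/
def PosBar (ρ : ℕ) [NeZero ρ] : Set (Fin ρ → ℝ) :=
  {x | 0 ≤ Bform x x ∧ 0 ≤ x 0}

/-- The open positive cone `Pos = {x : x² > 0 ∧ x 0 > 0}`. -/
def PosOpen (ρ : ℕ) [NeZero ρ] : Set (Fin ρ → ℝ) :=
  {x | 0 < Bform x x ∧ 0 < x 0}

/-- The ray `R(v) = {t • v : t ≥ 0}` spanned by `v`. -/
def Ray {ρ : ℕ} (v : Fin ρ → ℝ) : Set (Fin ρ → ℝ) :=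
  {w | ∃ t : ℝ, 0 ≤ t ∧ w = t • v}

/-!
Project `β` orthogonally onto `C^⊥`: with `t = β·C / C² ≥ 0` and `γ = β - t • C` one has `γ·C = 0`
and `γ² = β² - (β·C)² / C² ≥ β²`, because `C² < 0`. It remains to see that `γ` lies in the future
half `γ 0 ≥ 0` of the light cone. If `β·C = 0` then `γ = β`; otherwise `β·γ = γ² > 0`, and the
reverse Cauchy–Schwarz inequality `x·y ≥ 0` on `Pos̄` rules out `-γ ∈ Pos̄`.
-/

open Finset

variable {ρ : ℕ} [NeZero ρ]

lemma Bform_comm (x y : Fin ρ → ℝ) : Bform x y = Bform y x := by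
  simp only [Bform, mul_comm]

lemma Bform_sub_left (x y z : Fin ρ → ℝ) : Bform (x - y) z = Bform x z - Bform y z := by
  simp only [Bform, Pi.sub_apply, sub_mul, sum_sub_distrib]
  ring

lemma Bform_smul_left (t : ℝ) (x y : Fin ρ → ℝ) : Bform (t • x) y = t * Bform x y := by
  simp only [Bform, Pi.smul_apply, smul_eq_mul, mul_assoc, ← mul_sum]
  ring

lemma Bform_neg_left (x y : Fin ρ → ℝ) : Bform (-x) y = -Bform x y := by
  simpa using Bform_smul_left (-1) x y

lemma Bform_sub_right (x y z : Fin ρ → ℝ) : Bform x (y - z) = Bform x y - Bform x z := by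
  rw [Bform_comm, Bform_sub_left, Bform_comm y, Bform_comm z]

lemma Bform_smul_right (t : ℝ) (x y : Fin ρ → ℝ) : Bform x (t • y) = t * Bform x y := by
  rw [Bform_comm, Bform_smul_left, Bform_comm]

lemma sum_sq_le_sq_of_Bform_self_nonneg {x : Fin ρ → ℝ} (hx : 0 ≤ Bform x x) :
    ∑ i ∈ univ.erase 0, x i ^ 2 ≤ x 0 ^ 2 := by
  simp only [Bform, sub_nonneg] at hx
  simpa only [sq] using hx

lemma Bform_nonneg_of_mem_PosBar {x y : Fin ρ → ℝ} (hx : x ∈ PosBar ρ) (hy : y ∈ PosBar ρ) :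
    0 ≤ Bform x y := by
  have hsq : (∑ i ∈ univ.erase 0, x i * y i) ^ 2 ≤ (x 0 * y 0) ^ 2 :=
    calc (∑ i ∈ univ.erase 0, x i * y i) ^ 2
        ≤ (∑ i ∈ univ.erase 0, x i ^ 2) * ∑ i ∈ univ.erase 0, y i ^ 2 :=
          sum_mul_sq_le_sq_mul_sq _ _ _
      _ ≤ x 0 ^ 2 * y 0 ^ 2 :=
          mul_le_mul (sum_sq_le_sq_of_Bform_self_nonneg hx.1)
            (sum_sq_le_sq_of_Bform_self_nonneg hy.1) (sum_nonneg fun _ _ ↦ sq_nonneg _)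
            (sq_nonneg _)
      _ = (x 0 * y 0) ^ 2 := (mul_pow _ _ _).symm
  simpa only [Bform, sub_nonneg] using le_of_sq_le_sq hsq (mul_nonneg hx.2 hy.2)

lemma apply_zero_nonneg_of_Bform_pos {x y : Fin ρ → ℝ} (hx : 0 ≤ Bform x x) (hy : y ∈ PosBar ρ)
    (hxy : 0 < Bform y x) : 0 ≤ x 0 := by
  by_contra! hx0
  have hnegx : -x ∈ PosBar ρ := by
    refine ⟨?_, by simpa using hx0.le⟩
    rwa [Bform_neg_left, Bform_comm, Bform_neg_left, neg_neg]
  have := Bform_nonneg_of_mem_PosBar hy hnegx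
  rw [Bform_comm, Bform_neg_left, Bform_comm] at this
  linarith

section Projection

variable (β C : Fin ρ → ℝ)

lemma Bform_sub_proj_left (hC : Bform C C ≠ 0) :
    Bform (β - (Bform β C / Bform C C) • C) C = 0 := by
  rw [Bform_sub_left, Bform_smul_left, div_mul_cancel₀ _ hC, sub_self]

lemma Bform_self_sub_proj (hC : Bform C C ≠ 0) :
    Bform (β - (Bform β C / Bform C C) • C) (β - (Bform β C / Bform C C) • C) =
      Bform β β - Bform β C ^ 2 / Bform C C := by
  rw [Bform_sub_right, Bform_smul_right, Bform_sub_proj_left β C hC, mul_zero, sub_zero,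
    Bform_sub_left, Bform_smul_left, Bform_comm C β]
  ring

end Projection

theorem stmt14_general {ρ : ℕ} [NeZero ρ] (C : Fin ρ → ℝ)
    (hC2 : Bform C C < 0)
    (β : Fin ρ → ℝ) (hβ : β ∈ PosBar ρ) (hβC : Bform β C ≤ 0) :
    ∃ γ ∈ PosBar ρ, Bform γ C = 0 ∧ ∃ t : ℝ, 0 ≤ t ∧ β = γ + t • C := by
  rcases hβC.eq_or_lt with hβC_zero | hβC_neg
  · exact ⟨β, hβ, hβC_zero, 0, le_rfl, by simp⟩
  set t := Bform β C / Bform C C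
  set γ := β - t • C
  have hγC : Bform γ C = 0 := Bform_sub_proj_left β C hC2.ne
  have hγγ : Bform β β < Bform γ γ := by
    rw [Bform_self_sub_proj β C hC2.ne, lt_sub_iff_add_lt, add_lt_iff_neg_left]
    exact div_neg_of_pos_of_neg (sq_pos_of_neg hβC_neg) hC2
  have hβγ : Bform β γ = Bform γ γ := by
    have hγγ_expand : Bform γ γ = Bform β γ - t * Bform C γ := by
      rw [← Bform_smul_left, ← Bform_sub_left]
    rw [hγγ_expand, Bform_comm C, hγC, mul_zero, sub_zero]
  have hγ2 : 0 ≤ Bform γ γ := hβ.1.trans hγγ.le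
  refine ⟨γ, ⟨hγ2, apply_zero_nonneg_of_Bform_pos hγ2 hβ ?_⟩, hγC, t,
    div_nonneg_of_nonpos hβC hC2.le, (sub_add_cancel β _).symm⟩
  linarith [hβ.1]

/-- Claim (5.16): `C^{≤0} ∩ Pos̄ ⊆ (C^⊥ ∩ Pos̄) + R(C)` whenever `C² < 0`, `C 0 > 0`. -/
theorem stmt14 {ρ : ℕ} [NeZero ρ] (hρ : 1 ≤ ρ) (C : Fin ρ → ℝ)
    (hC2 : Bform C C < 0) (hC0 : 0 < C 0)
    (β : Fin ρ → ℝ) (hβ : β ∈ PosBar ρ) (hβC : Bform β C ≤ 0) :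
    ∃ γ ∈ PosBar ρ, Bform γ C = 0 ∧ ∃ t : ℝ, 0 ≤ t ∧ β = γ + t • C :=
  stmt14_general C hC2 β hβ hβC
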